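/- In the single-agent case (A = {a}), the formula K_a[a]⊥ is ∗-valid: for every epistemic model, every state s and every word α with s ⋈ α, we have s,α ⊨ K_a[a]⊥. -/

import Mathlib

/-- Words over the alphabet `A ⊕ F` (agents and formulas). -/
abbrev Word (A F : Type) := List (A ⊕ F)

/-- The agent occurrences of a word, in order. -/
def wAgents {A F : Type} (w : Word A F) : List A := w.filterMap Sum.getLeft?

/-- The formula occurrences of a word, in order (the projection `α↾_!`). -/
def wForms {A F : Type} (w : Word A F) : List F := w.filterMap Sum.getRight?

/-- `|α|_a`: the number of occurrences of agent `a` in `α`. -/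
def wcountA {A F : Type} [DecidableEq A] (w : Word A F) (a : A) : ℕ := (wAgents w).count a

/-- `|α|_!`: the number of formula occurrences in `α`. -/
def wcountF {A F : Type} (w : Word A F) : ℕ := (wForms w).length

/-- A history: in every prefix, every agent has received at most as many
messages as have been sent. -/
def IsHistory {A F : Type} [DecidableEq A] (w : Word A F) : Prop :=
  ∀ β : Word A F, β <+: w → ∀ a : A, wcountA β a ≤ wcountF β

/-- `α↾_{!a}`: the formulas of `α` that agent `a` has read, i.e. the restriction
of `α↾_!` to its first `|α|_a` elements. -/
def wRead {A F : Type} [DecidableEq A] (w : Word A F) (a : A) : List F :=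
  (wForms w).take (wcountA w a)

/-- The view relation `α ▷_a β`: `β` is a history with `β↾_! = β↾_{!a} = α↾_{!a}`. -/
def View {A F : Type} [DecidableEq A] (a : A) (α β : Word A F) : Prop :=
  IsHistory β ∧ wForms β = wRead β a ∧ wRead β a = wRead α a

/-- Formulas of the language `L_aa`. -/
inductive Form (P A : Type) : Type where
  | atom : P → Form P A
  | top  : Form P A
  | neg  : Form P A → Form P A
  | or   : Form P A → Form P A → Form P A
  | kdia : A → Form P A → Form P A            -- `K̂_a φ`
  | ann  : Form P A → Form P A → Form P A     -- `⟨ψ⟩φ`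
  | recv : A → Form P A → Form P A            -- `⟨a⟩φ`

/-- Modal depth `deg`. -/
def deg {P A : Type} : Form P A → ℕ
  | .atom _ => 0
  | .top => 0
  | .neg φ => deg φ
  | .or φ ψ => max (deg φ) (deg ψ)
  | .kdia _ φ => deg φ + 1
  | .ann ψ φ => deg ψ + deg φ
  | .recv _ φ => deg φ

/-- Size `‖φ‖` of a formula. -/
def fsize {P A : Type} : Form P A → ℕ
  | .atom _ => 2
  | .top => 1
  | .neg φ => fsize φ + 1
  | .or φ ψ => fsize φ + fsize ψ
  | .kdia _ φ => fsize φ + 1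
  | .ann ψ φ => 2 * fsize ψ + fsize φ
  | .recv _ φ => fsize φ + 2

/-- `⟨α⟩φ`: prefixing `φ` with the dynamic modalities of the letters of `α`. -/
def diaWord {P A : Type} : Word A (Form P A) → Form P A → Form P A
  | [], φ => φ
  | Sum.inl a :: rest, φ => .recv a (diaWord rest φ)
  | Sum.inr χ :: rest, φ => .ann χ (diaWord rest φ)

/-- `[α]φ := ¬⟨α⟩¬φ`. -/
def boxWord {P A : Type} (α : Word A (Form P A)) (φ : Form P A) : Form P A :=
  .neg (diaWord α (.neg φ))

/-- `⊥ := ¬⊤`. -/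
def fBot {P A : Type} : Form P A := .neg .top

/-- Size `‖α‖` of a word. -/
def sizeW {P A : Type} (w : Word A (Form P A)) : ℕ :=
  (w.map (fun l => match l with | Sum.inl _ => 1 | Sum.inr φ => fsize φ)).sum

lemma fsize_pos {P A : Type} (φ : Form P A) : 1 ≤ fsize φ := by
  induction φ <;> simp [fsize] <;> omega

def degW {P A : Type} (w : Word A (Form P A)) : ℕ := ((wForms w).map deg).sum

lemma degW_append {P A : Type} (v w : Word A (Form P A)) :
    degW (v ++ w) = degW v + degW w := by
  simp [degW, wForms, List.filterMap_append]

lemma sizeW_append {P A : Type} (v w : Word A (Form P A)) :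
    sizeW (v ++ w) = sizeW v + sizeW w := by
  simp [sizeW]

lemma eq_dropLast_concat {γ : Type} {l : List γ} {x : γ} (h : l.getLast? = some x) :
    l = l.dropLast ++ [x] := by
  cases l with
  | nil => simp at h
  | cons y ys =>
    have hne : y :: ys ≠ [] := by simp
    rw [List.getLast?_eq_some_getLast hne] at h
    obtain rfl : (y :: ys).getLast hne = x := by injection h
    exact (List.dropLast_append_getLast hne).symm

lemma degW_view_le {P A : Type} [DecidableEq A] {a : A} {α β : Word A (Form P A)}
    (h : View a α β) : degW β ≤ degW α := by
  obtain ⟨-, h1, h2⟩ := h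
  have : degW β = (((wForms α).map deg).take (wcountA α a)).sum := by
    rw [degW, h1, h2, wRead, List.map_take]
  rw [this]
  calc (((wForms α).map deg).take (wcountA α a)).sum
      ≤ (((wForms α).map deg).take (wcountA α a)).sum
        + (((wForms α).map deg).drop (wcountA α a)).sum := Nat.le_add_right _ _
    _ = degW α := by rw [← List.sum_append, List.take_append_drop]; rfl

lemma degW_single_inl {P A : Type} (a : A) : degW ([Sum.inl a] : Word A (Form P A)) = 0 := by
  simp [degW, wForms, List.filterMap_cons]

lemma degW_single_inr {P A : Type} (φ : Form P A) :
    degW ([Sum.inr φ] : Word A (Form P A)) = deg φ := by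
  simp [degW, wForms]

lemma sizeW_single_inl {P A : Type} (a : A) : sizeW ([Sum.inl a] : Word A (Form P A)) = 1 := by
  simp [sizeW]

lemma sizeW_single_inr {P A : Type} (φ : Form P A) :
    sizeW ([Sum.inr φ] : Word A (Form P A)) = fsize φ := by
  simp [sizeW]

lemma lexHelp {x1 y1 x2 y2 : ℕ} (h : x1 < x2 ∨ (x1 = x2 ∧ y1 < y2)) :
    Prod.Lex (· < ·) (· < ·) (x1, y1) (x2, y2) := by
  rcases h with h | ⟨h, h2⟩
  · exact Prod.Lex.left _ _ h
  · subst h; exact Prod.Lex.right _ h2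

/-- An epistemic model. -/
structure Model (P A W : Type) where
  rel : A → W → W → Prop
  val : P → W → Prop

mutual
/-- The executability (agreement) relation `s ⋈ α`. -/
def Exec {P A W : Type} [DecidableEq A] (M : Model P A W) (s : W)
    (α : Word A (Form P A)) : Prop :=
  match h : α.getLast? with
  | none => True
  | some (Sum.inl a) => Exec M s α.dropLast ∧ wcountA α.dropLast a < wcountF α.dropLast
  | some (Sum.inr φ) => Exec M s α.dropLast ∧ Sat M s α.dropLast φ
termination_by (degW α, 2 * sizeW α + 1)
decreasing_by
  all_goals
    have hc := eq_dropLast_concat h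
    generalize hγ : α.dropLast = γ at hc ⊢
    subst hc
    refine lexHelp ?_
    simp only [degW_append, sizeW_append, degW_single_inl, degW_single_inr,
      sizeW_single_inl, sizeW_single_inr, true_and, and_true]
    first
      | omega
      | (have h1 := fsize_pos φ; omega)

/-- The satisfaction relation `s, α ⊨ φ`. -/
def Sat {P A W : Type} [DecidableEq A] (M : Model P A W) (s : W)
    (α : Word A (Form P A)) : Form P A → Prop
  | .atom p => Exec M s α ∧ M.val p s
  | .top => Exec M s α
  | .neg φ => Exec M s α ∧ ¬ Sat M s α φ
  | .or φ ψ => Sat M s α φ ∨ Sat M s α ψ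
  | .kdia a φ => Exec M s α ∧
      ∃ (t : W) (β : Word A (Form P A)) (_ : M.rel a s t) (_ : View a α β),
        Exec M t β ∧ Sat M t β φ
  | .recv a φ => wcountA α a < wcountF α ∧ Sat M s (α ++ [Sum.inl a]) φ
  | .ann φ ψ => Sat M s α φ ∧ Sat M s (α ++ [Sum.inr φ]) ψ
termination_by φ => (degW α + deg φ, 2 * sizeW α + 2 * fsize φ)
decreasing_by
  all_goals
    refine lexHelp ?_
    simp only [deg, fsize, degW_append, sizeW_append, degW_single_inl,
      degW_single_inr, sizeW_single_inl, sizeW_single_inr, true_and, and_true]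
    first
      | omega
      | (have hv := degW_view_le ‹View _ _ _›; omega)
      | (have h1 := fsize_pos φ; omega)
      | (have h1 := fsize_pos ψ; omega)
      | (have h1 := fsize_pos φ; have h2 := fsize_pos ψ; omega)
end

/-- `φ` is `ε`-valid (valid): true at every state of every epistemic model under
the empty history. -/
def EValid (P A : Type) [DecidableEq A] (φ : Form P A) : Prop :=
  ∀ (W : Type) [Nonempty W] (M : Model P A W) (s : W), Sat M s [] φ

/-- `φ` is `∗`-valid (always valid): `[α]φ` is `ε`-valid for every word `α`. -/
def SValid (P A : Type) [DecidableEq A] (φ : Form P A) : Prop :=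
  ∀ α : Word A (Form P A), EValid P A (boxWord α φ)

/-- `φ ∧ ψ := ¬(¬φ ∨ ¬ψ)`. -/
def landF {P A : Type} (φ ψ : Form P A) : Form P A := .neg (.or (.neg φ) (.neg ψ))

/-- Conjunction of a list of formulas. -/
def bigAnd {P A : Type} (l : List (Form P A)) : Form P A := l.foldr landF .top

/-- `K_a φ := ¬K̂_a ¬φ`. -/
def KformF {P A : Type} (a : A) (φ : Form P A) : Form P A := .neg (.kdia a (.neg φ))

/-- `[a]φ := ¬⟨a⟩¬φ`. -/
def boxAg {P A : Type} (a : A) (φ : Form P A) : Form P A := .neg (.recv a (.neg φ))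

/-- `empty := ⋀_{a∈A}[a]⊥ ∧ ⋀_{a,b∈A} K_a[b]⊥`. -/
noncomputable def emptyF (P A : Type) [Fintype A] : Form P A :=
  landF (bigAnd ((Finset.univ : Finset A).toList.map fun a => boxAg a fBot))
    (bigAnd ((Finset.univ : Finset A).toList.flatMap fun a =>
      (Finset.univ : Finset A).toList.map fun b => KformF a (boxAg b fBot)))

/-! The view relation only lets agent `a` consider histories `β` in which it has already read
every announcement (`|β|_a = |β|_!`), and in such a history `⟨a⟩` is never executable; hence
`[a]⊥` holds at every state `a` considers possible. -/

lemma View.wcountF_le_wcountA {A F : Type} [DecidableEq A] {a : A} {α β : Word A F}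
    (h : View a α β) : wcountF β ≤ wcountA β a := by
  have hlen := congrArg List.length h.2.1
  rw [wRead, List.length_take] at hlen
  rw [wcountF, hlen]
  exact min_le_left _ _

lemma sat_boxAg_of_wcountF_le {P A W : Type} [DecidableEq A] {M : Model P A W} {t : W}
    {β : Word A (Form P A)} {a : A} (φ : Form P A) (hexec : Exec M t β)
    (hle : wcountF β ≤ wcountA β a) : Sat M t β (boxAg a φ) := by
  simp only [boxAg, Sat]
  exact ⟨hexec, fun ⟨hlt, _⟩ => (hlt.trans_le hle).false⟩

lemma sat_KformF_of_forall_view {P A W : Type} [DecidableEq A] {M : Model P A W} {s : W}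
    {α : Word A (Form P A)} {a : A} {φ : Form P A} (hexec : Exec M s α)
    (hK : ∀ t β, M.rel a s t → View a α β → Exec M t β → Sat M t β φ) :
    Sat M s α (KformF a φ) := by
  simp only [KformF, Sat]
  exact ⟨hexec, fun ⟨_, t, β, hrel, hview, hexecβ, _, hnot⟩ => hnot (hK t β hrel hview hexecβ)⟩

/-- In the single-agent case, `K_a[a]⊥` is `∗`-valid. -/
theorem stmt15 {P A W : Type} [DecidableEq A] (a : A) (hA : ∀ b : A, b = a)
    (M : Model P A W) (s : W) (α : Word A (Form P A)) (h : Exec M s α) :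
    Sat M s α (KformF a (boxAg a (fBot : Form P A))) :=
  sat_KformF_of_forall_view h fun _ _ _ hview hexec =>
    sat_boxAg_of_wcountF_le fBot hexec hview.wcountF_le_wcountA
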